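/- arXiv:1804.02797 — 2 statements merged into one kernel-verified Lean document; each statement's English description precedes it below -/
import Mathlib

section
/- Suppose p: [0,∞) → [0,∞) is a continuous probability density with CDF P satisfying P(0) = q ∈ [0,1), P(∞) = 1, and suppose the normalized rate-cost function satisfies s(r) = r/ι for all r ∈ (0, 1-q], where s(r) is determined by r(t) = P(t) - q and s(t) = ∫₀ᵗ x p(x) dx + t(1 + q - P(t)). Then necessarily q = 0 and p(x) = ι e^{-ιx} for x ≥ 0. -/
/-!
Write `F t = ∫₀ᵗ p`. The linearity hypothesis says `∫₀ᵗ x p(x) dx + t (1 - F t) = F t / ι` on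
`[0, ∞)`; differentiating, the terms `± t p(t)` cancel and leave `1 - F t = p t / ι`. Thus the
tail `1 - F` solves `y' = -ι y` with `y 0 = 1`, so `1 - F t = e^{-ιt}` and `p t = ι e^{-ιt}`.
Letting `t → ∞` in `P t = q + 1 - e^{-ιt}` gives `q + 1 = 1`.
-/

open Real Filter Set Topology

theorem HasDerivAt.eq_of_eqOn_Ici {f g : ℝ → ℝ} {f' g' a x : ℝ} (hfg : EqOn f g (Ici a))
    (hx : x ∈ Ici a) (hf : HasDerivAt f f' x) (hg : HasDerivAt g g' x) : f' = g' :=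
  (uniqueDiffOn_Ici a x hx).eq_deriv _
    (hf.hasDerivWithinAt.congr_of_mem (fun _ hy => (hfg hy).symm) hx) hg.hasDerivWithinAt

theorem eq_mul_exp_of_hasDerivAt_eq_mul {f : ℝ → ℝ} {c a : ℝ}
    (hf : ∀ t ∈ Ici a, HasDerivAt f (c * f t) t) :
    ∀ t ∈ Ici a, f t = f a * exp (c * (t - a)) := by
  set g : ℝ → ℝ := fun u => f u * exp (-c * (u - a))
  have hg : ∀ u ∈ Ici a, HasDerivAt g 0 u := by
    intro u hu
    have hexp : HasDerivAt (fun v => exp (-c * (v - a))) (exp (-c * (u - a)) * (-c * 1)) u :=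
      (((hasDerivAt_id u).sub_const a).const_mul (-c)).exp
    have h := (hf u hu).mul hexp
    rwa [show c * f u * exp (-c * (u - a)) + f u * (exp (-c * (u - a)) * (-c * 1)) = 0 by ring]
      at h
  intro t ht
  have hconst := constant_of_has_deriv_right_zero (f := g) (a := a) (b := t)
    (fun u hu => (hg u hu.1).continuousAt.continuousWithinAt)
    (fun u hu => (hg u hu.1).hasDerivWithinAt) t ⟨ht, le_rfl⟩
  have hgt : g t = f a := by simpa [g] using hconst
  rw [← hgt, mul_assoc, ← exp_add]
  simp

variable {p : ℝ → ℝ} {ι : ℝ}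

theorem density_eq_mul_tail_of_linear_cost (hp : Continuous p) (hι : ι ≠ 0)
    (hlin : ∀ t ∈ Ici (0 : ℝ),
      (∫ z in (0 : ℝ)..t, z * p z) + t * (1 - ∫ z in (0 : ℝ)..t, p z) =
        (∫ z in (0 : ℝ)..t, p z) / ι) :
    ∀ t ∈ Ici (0 : ℝ), p t = ι * (1 - ∫ z in (0 : ℝ)..t, p z) := by
  intro t ht
  have hF := (hp.integral_hasStrictDerivAt 0 t).hasDerivAt
  have hG := ((show Continuous fun z => z * p z by fun_prop).integral_hasStrictDerivAt 0 t).hasDerivAt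
  have hderiv := HasDerivAt.eq_of_eqOn_Ici hlin ht
    (hG.add ((hasDerivAt_id t).mul (hF.const_sub 1))) (hF.div_const ι)
  simp only [id, one_mul] at hderiv
  field_simp at hderiv
  linear_combination -hderiv

theorem tail_eq_exp_of_linear_cost (hp : Continuous p) (hι : ι ≠ 0)
    (hlin : ∀ t ∈ Ici (0 : ℝ),
      (∫ z in (0 : ℝ)..t, z * p z) + t * (1 - ∫ z in (0 : ℝ)..t, p z) =
        (∫ z in (0 : ℝ)..t, p z) / ι) :
    ∀ t ∈ Ici (0 : ℝ), 1 - ∫ z in (0 : ℝ)..t, p z = exp (-ι * t) := by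
  have hode : ∀ t ∈ Ici (0 : ℝ),
      HasDerivAt (fun u => 1 - ∫ z in (0 : ℝ)..u, p z) (-ι * (1 - ∫ z in (0 : ℝ)..t, p z)) t := by
    intro t ht
    have h := ((hp.integral_hasStrictDerivAt 0 t).hasDerivAt).const_sub 1
    rwa [density_eq_mul_tail_of_linear_cost hp hι hlin t ht, ← neg_mul] at h
  intro t ht
  simpa using eq_mul_exp_of_hasDerivAt_eq_mul hode t ht

theorem linear_rate_cost_iff_exponential_general (p P : ℝ → ℝ) (q ι : ℝ)
    (hι : 0 < ι)
    (hp_cont : Continuous p)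
    (hP : ∀ x, P x = q + ∫ z in (0:ℝ)..x, p z)
    (hlim : Filter.Tendsto P Filter.atTop (nhds 1))
    (hlin : ∀ t, 0 ≤ t →
      (∫ z in (0:ℝ)..t, z * p z) + t * (1 + q - P t) = (P t - q) / ι) :
    q = 0 ∧ ∀ x, 0 ≤ x → p x = ι * Real.exp (-ι * x) := by
  have hlin' : ∀ t ∈ Ici (0 : ℝ),
      (∫ z in (0 : ℝ)..t, z * p z) + t * (1 - ∫ z in (0 : ℝ)..t, p z) =
        (∫ z in (0 : ℝ)..t, p z) / ι := by
    intro t ht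
    have h := hlin t ht
    rw [hP t] at h
    linear_combination h
  have htail := tail_eq_exp_of_linear_cost hp_cont hι.ne' hlin'
  refine ⟨?_, fun x hx => ?_⟩
  · have hP_exp : (fun t => q + 1 - exp (-ι * t)) =ᶠ[atTop] P := by
      filter_upwards [eventually_ge_atTop 0] with t ht
      rw [hP t, ← htail t ht]
      ring
    have hexp : Tendsto (fun t => exp (-ι * t)) atTop (𝓝 0) :=
      tendsto_exp_atBot.comp (tendsto_id.const_mul_atTop_of_neg (neg_neg_of_pos hι))
    have hq1 : Tendsto P atTop (𝓝 (q + 1)) := by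
      simpa using (tendsto_const_nhds.sub hexp).congr' hP_exp
    linarith [tendsto_nhds_unique hq1 hlim]
  · rw [density_eq_mul_tail_of_linear_cost hp_cont hι.ne' hlin' x hx, htail x hx]

/-- If the normalized rate-cost function of static caching is linear, `s(r) = r / ι`,
then necessarily the undemand probability `q` is `0` and the request-delay density is
exponential: `p x = ι * exp (-ι x)` for `x ≥ 0`. -/
theorem linear_rate_cost_iff_exponential (p P : ℝ → ℝ) (q ι : ℝ)
    (hι : 0 < ι) (hq0 : 0 ≤ q) (hq1 : q < 1)
    (hp_cont : Continuous p)
    (hp_nonneg : ∀ x, 0 ≤ x → 0 ≤ p x)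
    (hP : ∀ x, P x = q + ∫ z in (0:ℝ)..x, p z)
    (hlim : Filter.Tendsto P Filter.atTop (nhds 1))
    (hlin : ∀ t, 0 ≤ t →
      (∫ z in (0:ℝ)..t, z * p z) + t * (1 + q - P t) = (P t - q) / ι) :
    q = 0 ∧ ∀ x, 0 ≤ x → p x = ι * Real.exp (-ι * x) :=
  linear_rate_cost_iff_exponential_general p P q ι hι hp_cont hP hlim hlin
end

section
/- For the Pareto request-delay density p(x) = ι₁ ι₂^{ι₁} / x^{ι₁+1} on [ι₂, ∞) with ι₁ > 0, ι₁ ≠ 1, and ι₂ > 0, the normalized rate-cost function is s(r) = ι₂/(1-ι₁) · (1-r)^{(ι₁-1)/ι₁} - ι₂/(1-ι₁) + ι₂ for r ∈ (0,1). For ι₁ = 1 it is s(r) = ι₂ ln(1/(1-r)) + ι₂. -/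
/-!
Above `ι₂` the integrand `x p(x)` is the power `ι₁ ι₂^ι₁ x^(-ι₁)` and below `ι₂` it vanishes, so
the truncated mean `∫₀ᵗ x p(x) dx` is an elementary power integral over `[ι₂, t]` (a logarithm when
`ι₁ = 1`). At the quantile `t = ι₂ (1-r)^(-1/ι₁)` the tail mass `(ι₂/t)^ι₁` equals `1 - r`, and both
the integral and the term `(1 - r) t` reduce to multiples of `ι₂ (1-r)^((ι₁-1)/ι₁)`.
-/

open Real MeasureTheory Set intervalIntegral

theorem integral_ite_le_eq_integral {E : Type*} [NormedAddCommGroup E] [NormedSpace ℝ E]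
    {f : ℝ → E} {a t : ℝ} (ha : 0 < a) (hat : a ≤ t) :
    ∫ x in (0:ℝ)..t, (if a ≤ x then f x else 0) = ∫ x in a..t, f x := by
  have hset : Ici a ∩ Ioc 0 t = Icc a t := by
    ext x
    simp only [mem_inter_iff, mem_Ici, mem_Ioc, mem_Icc]
    constructor
    · rintro ⟨hax, -, hxt⟩
      exact ⟨hax, hxt⟩
    · rintro ⟨hax, hxt⟩
      exact ⟨hax, ha.trans_le hax, hxt⟩
  calc ∫ x in (0:ℝ)..t, (if a ≤ x then f x else 0)
      = ∫ x in Ioc 0 t, (Ici a).indicator f x := by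
        rw [integral_of_le (ha.le.trans hat)]
        rfl
    _ = ∫ x in a..t, f x := by
        rw [MeasureTheory.integral_indicator measurableSet_Ici,
          Measure.restrict_restrict measurableSet_Ici, hset, integral_Icc_eq_integral_Ioc,
          integral_of_le hat]

theorem mul_div_rpow_add_one (c : ℝ) {x : ℝ} (hx : 0 < x) (ι : ℝ) :
    x * (c / x ^ (ι + 1)) = c * x ^ (-ι) := by
  rw [rpow_add hx, rpow_one, rpow_neg hx.le]
  field_simp

noncomputable def paretoDensity (ι₁ ι₂ x : ℝ) : ℝ :=
  if ι₂ ≤ x then ι₁ * ι₂ ^ ι₁ / x ^ (ι₁ + 1) else 0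

theorem integral_mul_paretoDensity {ι₁ ι₂ t : ℝ} (hι₂ : 0 < ι₂) (ht : ι₂ ≤ t) :
    ∫ x in (0:ℝ)..t, x * paretoDensity ι₁ ι₂ x = ι₁ * ι₂ ^ ι₁ * ∫ x in ι₂..t, x ^ (-ι₁) := by
  simp only [paretoDensity, mul_ite, mul_zero]
  rw [integral_ite_le_eq_integral hι₂ ht, ← intervalIntegral.integral_const_mul]
  refine integral_congr fun x hx => mul_div_rpow_add_one _ ?_ ι₁
  exact hι₂.trans_le (uIcc_of_le ht ▸ hx).1

theorem integral_mul_paretoDensity_of_ne_one {ι₁ ι₂ t : ℝ} (hι₁ : ι₁ ≠ 1) (hι₂ : 0 < ι₂)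
    (ht : ι₂ ≤ t) :
    ∫ x in (0:ℝ)..t, x * paretoDensity ι₁ ι₂ x =
      ι₁ / (1 - ι₁) * (ι₂ ^ ι₁ * t ^ (1 - ι₁) - ι₂) := by
  have h0 : (0:ℝ) ∉ uIcc ι₂ t := by
    rw [uIcc_of_le ht]
    exact fun h => h.1.not_gt hι₂
  have hne : -ι₁ ≠ -1 := fun h => hι₁ (neg_inj.mp h)
  have hι₂pow : ι₂ ^ ι₁ * ι₂ ^ (1 - ι₁) = ι₂ := by
    rw [← rpow_add hι₂, add_sub_cancel, rpow_one]
  have h1 : 1 - ι₁ ≠ 0 := sub_ne_zero.mpr (Ne.symm hι₁)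
  rw [integral_mul_paretoDensity hι₂ ht, integral_rpow (Or.inr ⟨hne, h0⟩), neg_add_eq_sub]
  field_simp
  rw [mul_assoc ι₁, mul_sub, hι₂pow]

theorem integral_mul_paretoDensity_one {ι₂ t : ℝ} (hι₂ : 0 < ι₂) (ht : ι₂ ≤ t) :
    ∫ x in (0:ℝ)..t, x * paretoDensity 1 ι₂ x = ι₂ * log (t / ι₂) := by
  have h0 : (0:ℝ) ∉ uIcc ι₂ t := by
    rw [uIcc_of_le ht]
    exact fun h => h.1.not_gt hι₂
  simp only [integral_mul_paretoDensity hι₂ ht, rpow_one, one_mul, rpow_neg_one, integral_inv h0]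

section Quantile

variable {ι c u : ℝ}

theorem le_mul_rpow_neg_inv (hι : 0 < ι) (hc : 0 ≤ c) (hu0 : 0 < u) (hu1 : u ≤ 1) :
    c ≤ c * u ^ (-(1 / ι)) :=
  le_mul_of_one_le_right hc
    (one_le_rpow_of_pos_of_le_one_of_nonpos hu0 hu1 (neg_nonpos.mpr (by positivity)))

theorem mul_mul_rpow_neg_inv (hι : ι ≠ 0) (hu : 0 < u) :
    u * (c * u ^ (-(1 / ι))) = c * u ^ ((ι - 1) / ι) := by
  rw [mul_left_comm, mul_comm u, ← rpow_add_one hu.ne']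
  congr 2
  field_simp
  ring

/-- With `t = c u^(-1/ι)` the left side is `t (c/t)^ι`: the tail mass `(c/t)^ι` equals `u`. -/
theorem rpow_mul_rpow_one_sub (hι : ι ≠ 0) (hc : 0 < c) (hu : 0 < u) :
    c ^ ι * (c * u ^ (-(1 / ι))) ^ (1 - ι) = u * (c * u ^ (-(1 / ι))) := by
  rw [mul_mul_rpow_neg_inv hι hu, mul_rpow hc.le (rpow_nonneg hu.le _), ← rpow_mul hu.le,
    ← mul_assoc, ← rpow_add hc, add_sub_cancel, rpow_one]
  congr 2
  field_simp
  ring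

end Quantile

/-- For the Pareto request-delay density `p x = ι₁ ι₂^ι₁ / x^(ι₁+1)` on `[ι₂, ∞)` with
`ι₁ > 0`, `ι₂ > 0`, the normalized rate-cost function for `r ∈ (0,1)` is
`s(r) = ι₂/(1-ι₁) (1-r)^((ι₁-1)/ι₁) - ι₂/(1-ι₁) + ι₂` when `ι₁ ≠ 1`, and
`s(r) = ι₂ ln(1/(1-r)) + ι₂` when `ι₁ = 1`, where `t = P⁻¹(r) = ι₂ (1-r)^(-1/ι₁)`. -/
theorem pareto_rate_cost (ι₁ ι₂ r t : ℝ) (hι₁ : 0 < ι₁) (hι₂ : 0 < ι₂)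
    (hr : r ∈ Set.Ioo (0:ℝ) 1) (ht : t = ι₂ * (1 - r) ^ (-(1 / ι₁))) :
    (ι₁ ≠ 1 →
      (∫ x in (0:ℝ)..t, x * (if ι₂ ≤ x then ι₁ * ι₂ ^ ι₁ / x ^ (ι₁ + 1) else 0)) +
        (1 - r) * t
        = ι₂ / (1 - ι₁) * (1 - r) ^ ((ι₁ - 1) / ι₁) - ι₂ / (1 - ι₁) + ι₂) ∧
    (ι₁ = 1 →
      (∫ x in (0:ℝ)..t, x * (if ι₂ ≤ x then ι₁ * ι₂ ^ ι₁ / x ^ (ι₁ + 1) else 0)) +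
        (1 - r) * t
        = ι₂ * Real.log (1 / (1 - r)) + ι₂) := by
  have hu : 0 < 1 - r := sub_pos.mpr hr.2
  have hι₂t : ι₂ ≤ t := by
    rw [ht]
    exact le_mul_rpow_neg_inv hι₁ hι₂.le hu (by linarith [hr.1])
  have htail : (1 - r) * t = ι₂ * (1 - r) ^ ((ι₁ - 1) / ι₁) := by
    rw [ht]
    exact mul_mul_rpow_neg_inv hι₁.ne' hu
  refine ⟨fun hne => ?_, fun h1 => ?_⟩
  · have hmean := integral_mul_paretoDensity_of_ne_one hne hι₂ hι₂t
    unfold paretoDensity at hmean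
    have hpow : ι₂ ^ ι₁ * t ^ (1 - ι₁) = (1 - r) * t := by
      rw [ht]
      exact rpow_mul_rpow_one_sub hι₁.ne' hι₂ hu
    have h1 : 1 - ι₁ ≠ 0 := sub_ne_zero.mpr (Ne.symm hne)
    rw [hmean, hpow, htail]
    field_simp
    ring
  · subst h1
    have hmean := integral_mul_paretoDensity_one hι₂ hι₂t
    unfold paretoDensity at hmean
    rw [sub_self, zero_div, rpow_zero, mul_one] at htail
    have hratio : t / ι₂ = 1 / (1 - r) := by
      field_simp
      linarith
    rw [hmean, hratio, htail]
end
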